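/- For any integer c viewed as an element of Z[ω], gde(c, √2) = 2·gde(c, 2), i.e., the greatest dividing exponent of √2 in Z[ω] equals twice the 2-adic valuation of c. -/
import Mathlib


noncomputable section

open Complex

/-- The eighth root of unity ω = e^{iπ/4}. -/
def omg : ℂ := Complex.exp (Real.pi * Complex.I / 4)

/-- √2 as a complex number. -/
def rt2 : ℂ := (Real.sqrt 2 : ℝ)

/-- Membership in the ring Z[ω] = {a + bω + cω² + dω³ : a,b,c,d ∈ ℤ}. -/
def Zomega (z : ℂ) : Prop :=
  ∃ a b c d : ℤ, z = a + b * omg + c * omg ^ 2 + d * omg ^ 3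

/-- Membership in the ring Z[1/√2, i] = {u/(√2)^n : u ∈ Z[ω], n ∈ ℕ}. -/
def ZRoot2i (z : ℂ) : Prop :=
  ∃ u : ℂ, Zomega u ∧ ∃ n : ℕ, z = u / rt2 ^ n

/-- `b` divides `z` within the ring Z[ω]. -/
def ZDvd (b z : ℂ) : Prop := ∃ q : ℂ, Zomega q ∧ z = b * q

/-- `k` is the greatest dividing exponent of base `b` with respect to `z`:
`b^k` divides `z` in Z[ω], while `b^(k+1)` does not. -/
def IsGde (b z : ℂ) (k : ℕ) : Prop := ZDvd (b ^ k) z ∧ ¬ ZDvd (b ^ (k + 1)) z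

/-- `k` is the smallest denominator exponent of base √2 with respect to `z`:
the smallest integer `k` such that `z·(√2)^k ∈ Z[ω]`. -/
def IsSde (z : ℂ) (k : ℤ) : Prop :=
  Zomega (z * rt2 ^ k) ∧ ∀ j : ℤ, Zomega (z * rt2 ^ j) → k ≤ j

lemma omg_eq : omg = (Real.sqrt 2 / 2 : ℝ) * (1 + Complex.I) := by
  rw [omg]
  rw [show (Real.pi : ℂ) * Complex.I / 4 = (Real.pi/4 : ℝ) * Complex.I by push_cast; ring]
  rw [Complex.exp_mul_I]
  rw [← Complex.ofReal_cos, ← Complex.ofReal_sin, Real.cos_pi_div_four, Real.sin_pi_div_four]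
  push_cast; ring

lemma rt2_sq : rt2 ^ 2 = 2 := by
  rw [rt2]; norm_cast
  rw [sq]; exact Real.mul_self_sqrt (by norm_num)

lemma sqrt2_irr_int (a n : ℤ) (h : Real.sqrt 2 * a = n) : a = 0 := by
  by_contra ha
  have ha' : (a:ℝ) ≠ 0 := Int.cast_ne_zero.mpr ha
  have : Real.sqrt 2 = ((n / a : ℚ) : ℝ) := by push_cast; field_simp; linarith
  exact irrational_sqrt_two ⟨_, this.symm⟩

/-- For a nonzero integer c, gde(c, √2) in Z[ω] equals twice the 2-adic
valuation of c. -/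
theorem stmt14 (c : ℤ) (hc : c ≠ 0) :
    IsGde rt2 (c : ℂ) (2 * padicValInt 2 c) := by
  have hfact : Fact (Nat.Prime 2) := ⟨Nat.prime_two⟩
  set k := padicValInt 2 c with hk
  obtain ⟨m, hm⟩ : (2:ℤ)^k ∣ c := by
    have := padicValInt_dvd (p := 2) c
    exact_mod_cast this
  have hmodd : ¬ (2:ℤ) ∣ m := by
    rintro ⟨t, ht⟩
    have h1 : ((2:ℕ):ℤ)^(k+1) ∣ c := ⟨t, by push_cast; rw [hm, ht]; ring⟩
    have := (padicValInt_dvd_iff (p := 2) (k+1) c).mp h1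
    omega
  constructor
  · refine ⟨(m : ℂ), ⟨m, 0, 0, 0, by push_cast; ring⟩, ?_⟩
    rw [pow_mul, rt2_sq, hm]; push_cast; ring
  · rintro ⟨q, ⟨a, b, c', d, hq⟩, heq⟩
    have hs : Real.sqrt 2 * Real.sqrt 2 = 2 := Real.mul_self_sqrt (by norm_num)
    have hsC : ((Real.sqrt 2 : ℝ):ℂ) * ((Real.sqrt 2 : ℝ):ℂ) = 2 := by exact_mod_cast hs
    have hI : Complex.I * Complex.I = -1 := Complex.I_mul_I
    have h2 : ((2:ℂ)^k) ≠ 0 := pow_ne_zero _ two_ne_zero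
    have hmeq : (m : ℂ) = rt2 * q := by
      have e1 : (c:ℂ) = (2:ℂ)^k * ((m:ℂ)) := by rw [hm]; push_cast; ring
      have e2 : (c:ℂ) = (2:ℂ)^k * (rt2 * q) := by
        rw [heq, pow_succ, pow_mul, rt2_sq]; ring
      have := e1.symm.trans e2
      exact mul_left_cancel₀ h2 this
    have key : (m:ℂ) = ((Real.sqrt 2*a + b - d : ℝ):ℂ) + ((b + Real.sqrt 2*c' + d : ℝ):ℂ) * Complex.I := by
      rw [hmeq, hq, omg_eq, rt2]
      push_cast
      set t : ℂ := ((Real.sqrt 2 : ℝ):ℂ)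
      linear_combination ((b:ℂ)*(1+Complex.I)/2 + t/2*(c':ℂ)*Complex.I
        + (t*t+2)/4*(d:ℂ)*(Complex.I-1)) * hsC
        + ((c':ℂ)*t^3/4 + (d:ℂ)*t^4*(3+Complex.I)/8) * hI
    have hre : (m:ℝ) = Real.sqrt 2*a + b - d := by
      have := congrArg Complex.re key
      simpa using this
    have him : (0:ℝ) = b + Real.sqrt 2*c' + d := by
      have := congrArg Complex.im key
      simpa using this
    have hc0 : c' = 0 := sqrt2_irr_int c' (-(b+d)) (by push_cast; linarith)
    have hbd : b + d = 0 := by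
      rw [hc0] at him
      have : ((b + d : ℤ) : ℝ) = 0 := by push_cast; push_cast at him; linarith
      exact_mod_cast this
    have ha0 : a = 0 := sqrt2_irr_int a (m - b + d) (by push_cast; linarith)
    have hm2 : m = 2*b := by
      have hd : d = -b := by omega
      rw [ha0, hd] at hre
      have : (m:ℝ) = ((2*b : ℤ):ℝ) := by push_cast; push_cast at hre; linarith
      exact_mod_cast this
    exact hmodd ⟨b, hm2⟩
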